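/- arXiv:2501.15027 — 2 statements merged into one kernel-verified Lean document; each statement's English description precedes it below -/
import Mathlib

section
/- Let P(M) be the set of prime elements of M and let K⟦(X_p)_{p∈P(M)}⟧ be the ring of multivariate formal power series over K in indeterminates indexed by P(M). Then the map Φ : 𝒜(M) → K⟦(X_p)_{p∈P(M)}⟧ defined by Φ(f) = Σ_{a ∈ M} f(a)·∏_p X_p^{ord_p(a)} (where ord_p(a) is the exponent of p in the prime factorization of a) is an isomorphism of K-algebras. -/
open scoped BigOperators

/-- The monoid `M` has trivial unit group: the only unit is `1`. -/
def TrivUnits (M : Type*) [CommMonoid M] : Prop := ∀ u : M, IsUnit u → u = 1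

/-- `M` is a unique factorization monoid: every element is a product of a multiset of
irreducible elements, and such a multiset is unique (exact uniqueness, which is the
correct formulation when the unit group is trivial). -/
def IsUFM (M : Type*) [CommMonoid M] : Prop :=
  (∀ a : M, ∃ l : Multiset M, (∀ b ∈ l, Irreducible b) ∧ l.prod = a) ∧
  ∀ l l' : Multiset M, (∀ b ∈ l, Irreducible b) → (∀ b ∈ l', Irreducible b) →
    l.prod = l'.prod → l = l'

/-- The Dirichlet product `(f ∗ g)(a) = ∑_{bc = a} f(b) g(c)`.  (The sum is a
`finsum`, which agrees with the intended finite sum since in a unique factorization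
monoid with trivial units every element has only finitely many decompositions.) -/
noncomputable def dmul (M K : Type*) [CommMonoid M] [Field K] (f g : M → K) : M → K :=
  fun a => ∑ᶠ (p : M × M) (_ : p.1 * p.2 = a), f p.1 * g p.2

open Classical in
/-- The identity arithmetic function `e`: `e 1 = 1` and `e a = 0` for `a ≠ 1`. -/
noncomputable def dOne (M K : Type*) [CommMonoid M] [Field K] : M → K :=
  fun a => if a = 1 then 1 else 0

/-- A prime element of the monoid `M`: a non-unit `p` such that `p ∣ ab` implies
`p ∣ a` or `p ∣ b`. -/
def IsPrimeElem {M : Type*} [CommMonoid M] (p : M) : Prop :=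
  ¬IsUnit p ∧ ∀ a b : M, p ∣ a * b → p ∣ a ∨ p ∣ b

/-- Two elements of `M` are relatively prime if they have no common prime factor. -/
def RelPrime {M : Type*} [CommMonoid M] (a b : M) : Prop :=
  ∀ p : M, IsPrimeElem p → p ∣ a → ¬p ∣ b

/-- A multiplicative arithmetic function: `f 1 = 1` and `f (ab) = f a * f b`
whenever `a` and `b` are relatively prime. -/
def IsMultFn {M K : Type*} [CommMonoid M] [Field K] (f : M → K) : Prop :=
  f 1 = 1 ∧ ∀ a b : M, RelPrime a b → f (a * b) = f a * f b

/-- The map Φ : 𝒜(M) → K⟦(X_p)_{p ∈ P(M)}⟧, Φ(f) = Σ_{a ∈ M} f(a) ∏_p X_p^{ord_p(a)}.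
Its coefficient at a finitely supported exponent vector `d : P(M) →₀ ℕ` is the value
of `f` at the unique element `∏_p p^{d p}` of `M` whose prime factorization has
exponent vector `d`. -/
noncomputable def PhiMap (M K : Type*) [CommMonoid M] [Field K] (f : M → K) :
    MvPowerSeries {p : M // IsPrimeElem p} K :=
  fun d => f (d.prod fun p n => (p : M) ^ n)


/-!
Reading off the prime factorization identifies `M` with the free commutative monoid
`P(M) →₀ ℕ` on its primes, via `d ↦ ∏ p ^ d p`. Under this identification `Φ f` is just
`f` precomposed with that bijection, so `Φ` is a linear bijection, and the Dirichlet
product, a sum over the factorizations `bc = a`, becomes the sum over the antidiagonal of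
the exponent vector of `a`, which is the coefficient formula for products of power series.
-/

namespace IsUFM

variable {M : Type*} [CommMonoid M] (hU : IsUFM M)

noncomputable def factors (a : M) : Multiset M := Classical.choose (hU.1 a)

include hU

theorem irreducible_of_mem_factors {a b : M} (hb : b ∈ hU.factors a) : Irreducible b :=
  (Classical.choose_spec (hU.1 a)).1 b hb

theorem prod_factors (a : M) : (hU.factors a).prod = a :=
  (Classical.choose_spec (hU.1 a)).2

theorem factors_prod {l : Multiset M} (hl : ∀ b ∈ l, Irreducible b) : hU.factors l.prod = l :=
  hU.2 _ _ (fun _ => hU.irreducible_of_mem_factors) hl (hU.prod_factors _)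

theorem factors_mul (a b : M) : hU.factors (a * b) = hU.factors a + hU.factors b := by
  have hirr : ∀ x ∈ hU.factors a + hU.factors b, Irreducible x := by
    intro x hx
    rcases Multiset.mem_add.1 hx with hx | hx <;> exact hU.irreducible_of_mem_factors hx
  rw [← hU.factors_prod hirr, Multiset.prod_add, hU.prod_factors, hU.prod_factors]

theorem mul_left_cancel {a b c : M} (h : a * b = a * c) : b = c := by
  have hfac : hU.factors a + hU.factors b = hU.factors a + hU.factors c := by
    rw [← hU.factors_mul, ← hU.factors_mul, h]
  rw [← hU.prod_factors b, ← hU.prod_factors c, add_left_cancel hfac]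

theorem isPrimeElem_of_irreducible {p : M} (hp : Irreducible p) : IsPrimeElem p := by
  refine ⟨hp.not_isUnit, fun a b ⟨c, hc⟩ => ?_⟩
  have hp_factors : hU.factors p = {p} := by
    simpa using hU.factors_prod (l := {p}) (by simpa using hp)
  have hfac : hU.factors a + hU.factors b = p ::ₘ hU.factors c := by
    rw [← hU.factors_mul, hc, hU.factors_mul, hp_factors, Multiset.singleton_add]
  have hp_mem : p ∈ hU.factors a + hU.factors b := hfac ▸ Multiset.mem_cons_self p _
  rcases Multiset.mem_add.1 hp_mem with h | h
  · exact Or.inl (hU.prod_factors a ▸ Multiset.dvd_prod h)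
  · exact Or.inr (hU.prod_factors b ▸ Multiset.dvd_prod h)

theorem irreducible_of_isPrimeElem {p : M} (hp : IsPrimeElem p) : Irreducible p := by
  have isUnit_of_dvd : ∀ a b, p = a * b → p ∣ a → IsUnit b := by
    rintro a b hab ⟨c, rfl⟩
    refine IsUnit.of_mul_eq_one_right c (hU.mul_left_cancel (a := p) ?_).symm
    rw [mul_one, ← mul_assoc, ← hab]
  refine ⟨hp.1, fun a b hab => ?_⟩
  rcases hp.2 a b (hab ▸ dvd_rfl) with h | h
  · exact Or.inr (isUnit_of_dvd a b hab h)
  · exact Or.inl (isUnit_of_dvd b a (hab.trans (mul_comm a b)) h)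

end IsUFM

section PrimeProd

variable {M : Type*} [CommMonoid M]

noncomputable def primeProd (d : {p : M // IsPrimeElem p} →₀ ℕ) : M :=
  d.prod fun p n => (p : M) ^ n

theorem primeProd_zero : primeProd (0 : {p : M // IsPrimeElem p} →₀ ℕ) = 1 :=
  Finsupp.prod_zero_index

theorem primeProd_add (d₁ d₂ : {p : M // IsPrimeElem p} →₀ ℕ) :
    primeProd (d₁ + d₂) = primeProd d₁ * primeProd d₂ :=
  Finsupp.prod_add_index' (fun p => pow_zero (p : M)) (fun p m n => pow_add (p : M) m n)

theorem primeProd_eq_prod_toMultiset (d : {p : M // IsPrimeElem p} →₀ ℕ) :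
    primeProd d = ((Finsupp.toMultiset d).map Subtype.val).prod := by
  induction d using Finsupp.induction with
  | zero => simp [primeProd_zero]
  | single_add p n d _ _ ih =>
    rw [primeProd_add, ih, map_add, Multiset.map_add, Multiset.prod_add]
    simp [primeProd, Multiset.map_nsmul, Multiset.prod_nsmul]

theorem primeProd_bijective (hU : IsUFM M) :
    Function.Bijective (primeProd : ({p : M // IsPrimeElem p} →₀ ℕ) → M) := by
  classical
  constructor
  · intro d₁ d₂ h
    have hirr : ∀ d : {p : M // IsPrimeElem p} →₀ ℕ,
        ∀ b ∈ (Finsupp.toMultiset d).map Subtype.val, Irreducible b := by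
      intro d b hb
      obtain ⟨q, _, rfl⟩ := Multiset.mem_map.1 hb
      exact hU.irreducible_of_isPrimeElem q.2
    have hmap := hU.2 _ _ (hirr d₁) (hirr d₂)
      (by rw [← primeProd_eq_prod_toMultiset, ← primeProd_eq_prod_toMultiset, h])
    exact Function.LeftInverse.injective Finsupp.toMultiset_toFinsupp
      (Multiset.map_injective Subtype.val_injective hmap)
  · intro a
    have hprime : ∀ b ∈ hU.factors a, IsPrimeElem b := fun b hb =>
      hU.isPrimeElem_of_irreducible (hU.irreducible_of_mem_factors hb)
    lift hU.factors a to Multiset {p : M // IsPrimeElem p} using hprime with s hs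
    refine ⟨Multiset.toFinsupp s, ?_⟩
    rw [primeProd_eq_prod_toMultiset, Multiset.toFinsupp_toMultiset, hs, hU.prod_factors]

theorem primeProd_eq_one_iff (hU : IsUFM M) (d : {p : M // IsPrimeElem p} →₀ ℕ) :
    primeProd d = 1 ↔ d = 0 := by
  rw [← primeProd_zero]
  exact (primeProd_bijective hU).injective.eq_iff

end PrimeProd

open Finset.HasAntidiagonal in
theorem finsum_mem_mul_eq_sum_antidiagonal {A M β : Type*} [AddMonoid A]
    [Finset.HasAntidiagonal A] [Monoid M] [AddCommMonoid β] {e : A → M}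
    (he : Function.Bijective e) (he_add : ∀ a b, e (a + b) = e a * e b)
    (h : M × M → β) (d : A) :
    ∑ᶠ x ∈ {x : M × M | x.1 * x.2 = e d}, h x =
      ∑ q ∈ antidiagonal d, h (e q.1, e q.2) := by
  have hset : {x : M × M | x.1 * x.2 = e d} = Prod.map e e '' ↑(antidiagonal d) := by
    ext ⟨x, y⟩
    obtain ⟨a, rfl⟩ := he.2 x
    obtain ⟨b, rfl⟩ := he.2 y
    simp [← he_add, he.1.eq_iff]
  rw [hset, finsum_mem_image (he.1.prodMap he.1).injOn, finsum_mem_coe_finset]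
  rfl

theorem statement4_general {M K : Type*} [CommMonoid M] [Field K]
    (hU : IsUFM M) :
    Function.Bijective (PhiMap M K) ∧
    (PhiMap M K (dOne M K) = 1) ∧
    (∀ f g : M → K, PhiMap M K (f + g) = PhiMap M K f + PhiMap M K g) ∧
    (∀ (c : K) (f : M → K), PhiMap M K (c • f) = c • PhiMap M K f) ∧
    (∀ f g : M → K, PhiMap M K (dmul M K f g) = PhiMap M K f * PhiMap M K g) := by
  classical
  refine ⟨(primeProd_bijective hU).comp_right, ?_, fun _ _ => rfl, fun _ _ => rfl, ?_⟩
  · ext d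
    simp only [MvPowerSeries.coeff_one]
    exact if_congr (primeProd_eq_one_iff hU d) rfl rfl
  · intro f g
    ext d
    rw [MvPowerSeries.coeff_mul]
    exact finsum_mem_mul_eq_sum_antidiagonal (primeProd_bijective hU) primeProd_add
      (fun x => f x.1 * g x.2) d

theorem statement4 {M K : Type*} [CommMonoid M] [Field K]
    (hT : TrivUnits M) (hU : IsUFM M) :
    Function.Bijective (PhiMap M K) ∧
    (PhiMap M K (dOne M K) = 1) ∧
    (∀ f g : M → K, PhiMap M K (f + g) = PhiMap M K f + PhiMap M K g) ∧
    (∀ (c : K) (f : M → K), PhiMap M K (c • f) = c • PhiMap M K f) ∧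
    (∀ f g : M → K, PhiMap M K (dmul M K f g) = PhiMap M K f * PhiMap M K g) :=
  statement4_general hU
end

section
/- The Krull dimension of the topological space 𝓜(A) — the supremum of the lengths n of chains Z₀ ⊊ Z₁ ⊊ ⋯ ⊊ Z_n of irreducible closed subsets of 𝓜(A) — equals the cardinality of Max(A); in particular it is infinite if A has infinitely many maximal ideals, and equals n if A has exactly n maximal ideals. -/
open Ideal

/-- A totally multiplicative arithmetic function on the monoid `I_A` of nonzero
ideals of `A`, with values in `K`.  It is encoded as a function on all ideals,
with `f(A) = 1`, `f(𝔞𝔟) = f(𝔞) f(𝔟)` for nonzero ideals `𝔞, 𝔟`, and the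
convention `f((0)) = 0`. -/
structure TotMult (A K : Type*) [CommRing A] [Field K] where
  toFun : Ideal A → K
  map_top : toFun ⊤ = 1
  map_mul : ∀ I J : Ideal A, I ≠ ⊥ → J ≠ ⊥ → toFun (I * J) = toFun I * toFun J
  map_bot : toFun ⊥ = 0

/-- The basic open set 𝒟(a) = {f ∈ 𝓜(A) : f(aA) ≠ 0}. -/
def Dset (A K : Type*) [CommRing A] [Field K] (a : A) : Set (TotMult A K) :=
  {f | f.toFun (Ideal.span {a}) ≠ 0}

/-- The topology on 𝓜(A) whose closed sets are the sets
𝒱(S) = {f : f(aA) = 0 for all a ∈ S}, S ⊆ A∖{0}; equivalently, the topology with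
basis of open sets the sets 𝒟(a) for a ∈ A∖{0} (the family of such 𝒟(a) is closed
under finite intersections, since 𝒟(a) ∩ 𝒟(b) = 𝒟(ab) and 𝒟(1) is the whole
space, so the topology it generates has exactly the arbitrary unions
∪_{a ∈ S} 𝒟(a) = complement of 𝒱(S) as its open sets). -/
instance totMultTopology (A K : Type*) [CommRing A] [Field K] :
    TopologicalSpace (TotMult A K) :=
  TopologicalSpace.generateFrom {U | ∃ a : A, a ≠ 0 ∧ U = Dset A K a}

/-- 𝒵(f), the set of prime ideal zeros of `f`: maximal ideals `𝔭` with `f(𝔭) = 0`. -/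
def Zset (A K : Type*) [CommRing A] [Field K] (f : TotMult A K) : Set (Ideal A) :=
  {p | p.IsMaximal ∧ f.toFun p = 0}

/-!
Since `f(aA)` is the product of the values of `f` at the maximal ideals dividing `aA`, a function
`f ∈ 𝓜(A)` specializes to `g` exactly when every `a` with `f(aA) = 0` also has `g(aA) = 0`.
For a finite set `T` of maximal ideals let `f_T` be the function vanishing exactly on `T`:
`T ⊊ T'` gives `f_T ⤳ f_T'` but not conversely (prime avoidance yields `a ∈ 𝔭 ∖ ⋃ T` for
`𝔭 ∈ T' ∖ T`), so chains of finite sets of maximal ideals give chains of irreducible closed sets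
`closure {f_T}`. Conversely, if `Max(A)` is finite then `{f | f(𝔭) = 0} = 𝒱({a})` for a nonzero
`a` lying in `𝔭` and in no other maximal ideal, and an irreducible closed set, being covered by
finitely many such sets, is cut out by the maximal ideals at which all its members vanish. Sending
it to this set of maximal ideals is then strictly antitone.
-/

open Order

theorem Finset.exists_ltSeries_length_eq_card {α : Type*} (s : Finset α) :
    ∃ p : LTSeries (Finset α), p.length = s.card ∧ p.last = s := by
  classical
  induction s using Finset.induction_on with
  | empty => exact ⟨RelSeries.singleton _ ∅, rfl, rfl⟩
  | insert a s ha ih =>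
    obtain ⟨p, hp, rfl⟩ := ih
    exact ⟨p.snoc (insert a p.last) (Finset.ssubset_insert ha), by simp [hp, ha], by simp⟩

theorem Order.card_le_krullDim_finset (α : Type*) :
    (ENat.card α : WithBot ℕ∞) ≤ krullDim (Finset α) := by
  rcases finite_or_infinite α with hα | hα
  · have := Fintype.ofFinite α
    obtain ⟨p, hp, -⟩ := (Finset.univ : Finset α).exists_ltSeries_length_eq_card
    rw [ENat.card_eq_coe_fintype_card, ← Finset.card_univ, ← hp]
    exact p.length_le_krullDim
  · have : InfiniteDimensionalOrder (Finset α) := ⟨fun n => by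
      obtain ⟨s, hs⟩ := Infinite.exists_subset_card_eq α n
      obtain ⟨p, hp, -⟩ := s.exists_ltSeries_length_eq_card
      exact ⟨p, hp.trans hs⟩⟩
    rw [krullDim_eq_top]
    exact le_top

theorem Order.krullDim_set_le_card (α : Type*) : krullDim (Set α) ≤ ENat.card α := by
  rcases finite_or_infinite α with hα | hα
  · rw [ENat.card_eq_coe_natCard]
    refine iSup_le fun p => ?_
    have hchain : p.head.ncard + p.length ≤ p.last.ncard :=
      (p.map Set.ncard Set.ncard_strictMono).head_add_length_le_nat
    have hcard := Set.ncard_le_card p.last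
    exact_mod_cast (by omega : p.length ≤ Nat.card α)
  · simp

theorem Ideal.exists_mem_ne_zero_forall_notMem {R : Type*} [CommRing R] [Nontrivial R]
    {M : Ideal R} [M.IsMaximal] (hM : M ≠ ⊥) {S : Set (Ideal R)} (hS : S.Finite)
    (hSprime : ∀ I ∈ S, I.IsPrime) (hMS : M ∉ S) :
    ∃ a ∈ M, a ≠ 0 ∧ ∀ I ∈ S, a ∉ I := by
  have hnot : ¬(M : Set R) ⊆ ⋃ I ∈ insert ⊥ S, I := by
    rw [subset_iUnion_iff_mem_of_isMaximal_of_finite (hS.insert ⊥) ⊥ ⊥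
      (fun I hI h _ => hSprime I ((Set.mem_insert_iff.mp hI).resolve_left h)) bot_ne_top
      bot_ne_top]
    rintro (h | h)
    exacts [hM h, hMS h]
  simp only [Set.not_subset, Set.mem_iUnion, Set.mem_insert_iff, exists_prop, not_exists,
    not_and, forall_eq_or_imp] at hnot
  obtain ⟨a, haM, ha0, haS⟩ := hnot
  exact ⟨a, haM, by simpa using ha0, haS⟩

theorem IsIrreducible.exists_subset_of_subset_biUnion {X ι : Type*} [TopologicalSpace X]
    {s : Set X} (hs : IsIrreducible s) {t : Set ι} (ht : t.Finite) {Z : ι → Set X}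
    (hZ : ∀ i ∈ t, IsClosed (Z i)) (hsZ : s ⊆ ⋃ i ∈ t, Z i) : ∃ i ∈ t, s ⊆ Z i := by
  classical
  obtain ⟨z, hz, hsz⟩ := isIrreducible_iff_sUnion_isClosed.mp hs (ht.toFinset.image Z)
    (by simpa using hZ) (by simpa [Set.sUnion_image] using hsZ)
  obtain ⟨i, hi, rfl⟩ := Finset.mem_image.mp hz
  exact ⟨i, ht.mem_toFinset.mp hi, hsz⟩

open UniqueFactorizationMonoid TopologicalSpace

namespace TotMult

variable {A K : Type*} [CommRing A] [Field K]

theorem apply_multiset_prod [IsDomain A] (f : TotMult A K) {s : Multiset (Ideal A)}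
    (hs : ∀ I ∈ s, I ≠ ⊥) : f.toFun s.prod = (s.map f.toFun).prod := by
  induction s using Multiset.induction with
  | empty => simpa [Ideal.one_eq_top] using f.map_top
  | cons I s ih =>
    have hs' : ∀ J ∈ s, J ≠ ⊥ := fun J hJ => hs J (Multiset.mem_cons_of_mem hJ)
    have hprod : s.prod ≠ ⊥ := Multiset.prod_ne_zero fun h0 => hs' ⊥ h0 rfl
    rw [Multiset.prod_cons, f.map_mul _ _ (hs I (Multiset.mem_cons_self I s)) hprod, ih hs',
      Multiset.map_cons, Multiset.prod_cons]

theorem apply_span_singleton_mul [IsDomain A] (f : TotMult A K) {a b : A} (ha : a ≠ 0)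
    (hb : b ≠ 0) :
    f.toFun (span {a * b}) = f.toFun (span {a}) * f.toFun (span {b}) := by
  rw [← span_singleton_mul_span_singleton]
  exact f.map_mul _ _ (span_singleton_eq_bot.not.mpr ha) (span_singleton_eq_bot.not.mpr hb)

variable [IsDedekindDomain A]

theorem apply_eq_prod_normalizedFactors (f : TotMult A K) {I : Ideal A} (hI : I ≠ ⊥) :
    f.toFun I = ((normalizedFactors I).map f.toFun).prod := by
  conv_lhs => rw [← associated_iff_eq.mp (prod_normalizedFactors hI)]
  exact f.apply_multiset_prod fun J hJ => (prime_of_normalized_factor J hJ).ne_zero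

theorem apply_eq_zero_iff (f : TotMult A K) {I : Ideal A} (hI : I ≠ ⊥) :
    f.toFun I = 0 ↔ ∃ p : Ideal A, p.IsMaximal ∧ I ≤ p ∧ f.toFun p = 0 := by
  rw [f.apply_eq_prod_normalizedFactors hI, Multiset.prod_eq_zero_iff, Multiset.mem_map]
  constructor
  · rintro ⟨p, hp, hp0⟩
    obtain ⟨hprime, hIp⟩ := (Ideal.mem_normalizedFactors_iff hI).mp hp
    exact ⟨p, hprime.isMaximal (ne_bot_of_le_ne_bot hI hIp), hIp, hp0⟩
  · rintro ⟨p, hpm, hIp, hp0⟩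
    exact ⟨p, (Ideal.mem_normalizedFactors_iff hI).mpr ⟨hpm.isPrime, hIp⟩, hp0⟩

theorem apply_span_singleton_eq_zero_iff (f : TotMult A K) {a : A} (ha : a ≠ 0) :
    f.toFun (span {a}) = 0 ↔ ∃ p : Ideal A, p.IsMaximal ∧ a ∈ p ∧ f.toFun p = 0 := by
  simp only [f.apply_eq_zero_iff (span_singleton_eq_bot.not.mpr ha), span_singleton_le_iff_mem]

variable (K) in
noncomputable def ofMaximal (g : Ideal A → K) : TotMult A K where
  toFun I := if I = ⊥ then 0 else ((normalizedFactors I).map g).prod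
  map_top := by
    rw [if_neg top_ne_bot, ← one_eq_top, normalizedFactors_one, Multiset.map_zero,
      Multiset.prod_zero]
  map_mul I J hI hJ := by
    rw [if_neg (show I * J ≠ ⊥ from mul_ne_zero hI hJ), if_neg hI, if_neg hJ,
      normalizedFactors_mul hI hJ, Multiset.map_add, Multiset.prod_add]
  map_bot := if_pos rfl

theorem ofMaximal_apply_of_isPrime (g : Ideal A → K) {p : Ideal A} (hp : p.IsPrime)
    (hp0 : p ≠ ⊥) : (ofMaximal K g).toFun p = g p := by
  have hirr : Irreducible p := ((prime_iff_isPrime hp0).mpr hp).irreducible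
  dsimp only [ofMaximal]
  rw [if_neg hp0, normalizedFactors_irreducible hirr, normalize_eq,
    Multiset.map_singleton, Multiset.prod_singleton]

variable (K) in
noncomputable def ofZeros (Z : Set (Ideal A)) : TotMult A K :=
  ofMaximal K (Zᶜ.indicator 1)

theorem ofZeros_apply_span_singleton_eq_zero_iff (hA : ¬IsField A) {Z : Set (Ideal A)}
    (hZ : ∀ q ∈ Z, q.IsMaximal) {a : A} (ha : a ≠ 0) :
    (ofZeros K Z).toFun (span {a}) = 0 ↔ ∃ q ∈ Z, a ∈ q := by
  have hmax {q : Ideal A} (hq : q.IsMaximal) : (ofZeros K Z).toFun q = Zᶜ.indicator 1 q :=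
    ofMaximal_apply_of_isPrime _ hq.isPrime (Ring.ne_bot_of_isMaximal_of_not_isField hq hA)
  rw [apply_span_singleton_eq_zero_iff _ ha]
  constructor
  · rintro ⟨q, hq, haq, hq0⟩
    by_contra! hZa
    have hqZ : q ∈ Zᶜ := fun hqZ => hZa q hqZ haq
    rw [hmax hq, Set.indicator_of_mem hqZ] at hq0
    exact one_ne_zero hq0
  · rintro ⟨q, hqZ, haq⟩
    exact ⟨q, hZ q hqZ, haq, by rw [hmax (hZ q hqZ), Set.indicator_of_notMem (not_not_intro hqZ)]⟩

end TotMult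

section Topology

variable {A K : Type*} [CommRing A] [Field K]

theorem Dset_one : Dset A K 1 = Set.univ := by
  ext f
  simp [Dset, f.map_top]

variable [IsDomain A]

theorem Dset_mul {a b : A} (ha : a ≠ 0) (hb : b ≠ 0) :
    Dset A K (a * b) = Dset A K a ∩ Dset A K b := by
  ext f
  simp only [Dset, Set.mem_ofPred_eq, Set.mem_inter_iff, f.apply_span_singleton_mul ha hb,
    mul_ne_zero_iff]

variable (A K) in
theorem isTopologicalBasis_Dset :
    IsTopologicalBasis {U : Set (TotMult A K) | ∃ a : A, a ≠ 0 ∧ U = Dset A K a} where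
  exists_subset_inter := by
    rintro _ ⟨a, ha, rfl⟩ _ ⟨b, hb, rfl⟩ f hf
    refine ⟨_, ⟨a * b, mul_ne_zero ha hb, rfl⟩, ?_⟩
    rw [Dset_mul ha hb]
    exact ⟨hf, subset_rfl⟩
  sUnion_eq := Set.sUnion_eq_univ_iff.mpr fun _ =>
    ⟨_, ⟨1, one_ne_zero, rfl⟩, by rw [Dset_one]; trivial⟩
  eq_generateFrom := rfl

theorem isOpen_Dset {a : A} (ha : a ≠ 0) : IsOpen (Dset A K a) :=
  (isTopologicalBasis_Dset A K).isOpen ⟨a, ha, rfl⟩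

theorem TotMult.specializes_iff_forall_apply_span_singleton {f g : TotMult A K} :
    f ⤳ g ↔ ∀ a : A, a ≠ 0 → f.toFun (span {a}) = 0 → g.toFun (span {a}) = 0 := by
  simp only [specializes_iff_mem_closure, (isTopologicalBasis_Dset A K).mem_closure_iff,
    Set.mem_ofPred_eq, forall_exists_index, and_imp, Set.inter_singleton_nonempty]
  constructor
  · intro h a ha hfa
    by_contra hga
    exact h _ a ha rfl hga hfa
  · rintro h _ a ha rfl hga hfa
    exact hga (h a ha hfa)

end Topology

namespace TotMult

variable {A K : Type*} [CommRing A] [IsDedekindDomain A] [Field K]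

theorem ofZeros_specializes (hA : ¬IsField A) {Z Z' : Set (Ideal A)}
    (hZ' : ∀ q ∈ Z', q.IsMaximal) (hZZ' : Z ⊆ Z') : ofZeros K Z ⤳ ofZeros K Z' := by
  rw [specializes_iff_forall_apply_span_singleton]
  intro a ha hZa
  rw [ofZeros_apply_span_singleton_eq_zero_iff hA (fun q hq => hZ' q (hZZ' hq)) ha] at hZa
  rw [ofZeros_apply_span_singleton_eq_zero_iff hA hZ' ha]
  obtain ⟨q, hq, haq⟩ := hZa
  exact ⟨q, hZZ' hq, haq⟩

theorem ofZeros_not_specializes (hA : ¬IsField A) {Z Z' : Set (Ideal A)} (hZfin : Z.Finite)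
    (hZ : ∀ q ∈ Z, q.IsMaximal) (hZ' : ∀ q ∈ Z', q.IsMaximal) {p : Ideal A} (hpZ' : p ∈ Z')
    (hpZ : p ∉ Z) : ¬ofZeros K Z' ⤳ ofZeros K Z := by
  have hp := hZ' p hpZ'
  obtain ⟨a, hap, ha0, ha⟩ := exists_mem_ne_zero_forall_notMem
    (Ring.ne_bot_of_isMaximal_of_not_isField hp hA) hZfin (fun q hq => (hZ q hq).isPrime) hpZ
  rw [specializes_iff_forall_apply_span_singleton]
  intro h
  obtain ⟨q, hq, haq⟩ := (ofZeros_apply_span_singleton_eq_zero_iff hA hZ ha0).mp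
    (h a ha0 ((ofZeros_apply_span_singleton_eq_zero_iff hA hZ' ha0).mpr ⟨p, hpZ', hap⟩))
  exact ha q hq haq

variable (K) in
def closureOfZeros (T : Finset {p : Ideal A | p.IsMaximal}) : IrreducibleCloseds (TotMult A K) :=
  ⟨closure {ofZeros K (Subtype.val '' (T : Set {p : Ideal A | p.IsMaximal}))},
    isIrreducible_singleton.closure, isClosed_closure⟩

theorem strictAnti_closureOfZeros (hA : ¬IsField A) :
    StrictAnti (closureOfZeros (A := A) K) := by
  intro T T' hTT'
  obtain ⟨p, hpT', hpT⟩ := Finset.exists_of_ssubset hTT'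
  have hmax (T : Finset {p : Ideal A | p.IsMaximal}) :
      ∀ q ∈ Subtype.val '' (T : Set {p : Ideal A | p.IsMaximal}), q.IsMaximal := by
    rintro _ ⟨q, -, rfl⟩
    exact q.2
  refine lt_of_le_not_ge ?_ ?_
  · exact (ofZeros_specializes hA (hmax T') (Set.image_mono hTT'.subset)).closure_subset
  · exact fun h => ofZeros_not_specializes hA (T.finite_toSet.image _) (hmax T) (hmax T')
      ⟨p, hpT', rfl⟩ (Subtype.val_injective.mem_set_image.not.mpr hpT)
      (specializes_iff_closure_subset.mpr h)

def commonZeros (Z : Set (TotMult A K)) : Set {p : Ideal A | p.IsMaximal} :=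
  {p | ∀ f ∈ Z, f.toFun p = 0}

section FinitelyManyMaximal

variable [Finite {p : Ideal A | p.IsMaximal}]

theorem isClosed_setOf_apply_eq_zero (hA : ¬IsField A) {p : Ideal A} (hp : p.IsMaximal) :
    IsClosed {f : TotMult A K | f.toFun p = 0} := by
  obtain ⟨a, hap, ha0, ha⟩ := exists_mem_ne_zero_forall_notMem
    (Ring.ne_bot_of_isMaximal_of_not_isField hp hA)
    ((Set.toFinite {p : Ideal A | p.IsMaximal}).sdiff (t := {p}))
    (fun q hq => hq.1.isPrime) (fun h => h.2 rfl)
  have hDset : {f : TotMult A K | f.toFun p = 0} = (Dset A K a)ᶜ := by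
    ext f
    simp only [Set.mem_ofPred_eq, Dset, Set.mem_compl_iff, not_not,
      f.apply_span_singleton_eq_zero_iff ha0]
    constructor
    · exact fun hfp => ⟨p, hp, hap, hfp⟩
    · rintro ⟨q, hq, haq, hfq⟩
      obtain rfl : q = p := by_contra fun hqp => ha q ⟨hq, hqp⟩ haq
      exact hfq
  exact hDset ▸ (isOpen_Dset ha0).isClosed_compl

theorem mem_of_forall_mem_commonZeros (hA : ¬IsField A) {Z : Set (TotMult A K)}
    (hZirr : IsIrreducible Z) (hZ : IsClosed Z) {f : TotMult A K}
    (hf : ∀ p ∈ commonZeros Z, f.toFun p = 0) : f ∈ Z := by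
  by_contra hfZ
  obtain ⟨_, ⟨a, ha0, rfl⟩, hfa, haZ⟩ :=
    (isTopologicalBasis_Dset A K).isOpen_iff.mp hZ.isOpen_compl f hfZ
  have hcover : Z ⊆ ⋃ q ∈ {q : Ideal A | q.IsMaximal ∧ a ∈ q}, {g | g.toFun q = 0} := by
    intro g hg
    obtain ⟨q, hq, haq, hgq⟩ := (g.apply_span_singleton_eq_zero_iff ha0).mp
      (not_not.mp fun hga => haZ hga hg)
    exact Set.mem_biUnion ⟨hq, haq⟩ hgq
  obtain ⟨q, ⟨hq, haq⟩, hZq⟩ := hZirr.exists_subset_of_subset_biUnion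
    ((Set.toFinite {p : Ideal A | p.IsMaximal}).subset fun _ h => h.1)
    (fun q hq => isClosed_setOf_apply_eq_zero hA hq.1) hcover
  exact hfa ((f.apply_span_singleton_eq_zero_iff ha0).mpr ⟨q, hq, haq, hf ⟨q, hq⟩ hZq⟩)

theorem strictAnti_commonZeros (hA : ¬IsField A) :
    StrictAnti fun Z : IrreducibleCloseds (TotMult A K) =>
      commonZeros (Z : Set (TotMult A K)) := by
  refine Antitone.strictAnti_of_injective (fun Z₁ Z₂ hZ p hp f hf => hp f (hZ hf)) ?_
  have hsub {Z W : IrreducibleCloseds (TotMult A K)}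
      (h : commonZeros (Z : Set (TotMult A K)) = commonZeros (W : Set (TotMult A K))) :
      (W : Set (TotMult A K)) ⊆ Z := fun f hf =>
    mem_of_forall_mem_commonZeros hA Z.isIrreducible Z.isClosed fun p hp => (h ▸ hp) f hf
  exact fun Z₁ Z₂ h => IrreducibleCloseds.ext ((hsub h.symm).antisymm (hsub h))

end FinitelyManyMaximal

theorem topologicalKrullDim_eq_card (hA : ¬IsField A) :
    topologicalKrullDim (TotMult A K) = ENat.card {p : Ideal A | p.IsMaximal} := by
  refine le_antisymm ?_ ?_
  · rcases finite_or_infinite {p : Ideal A | p.IsMaximal} with hfin | hinf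
    · calc topologicalKrullDim (TotMult A K)
          ≤ krullDim (Set {p : Ideal A | p.IsMaximal})ᵒᵈ :=
            krullDim_le_of_strictMono _ (strictAnti_commonZeros hA).dual_right
        _ = krullDim (Set {p : Ideal A | p.IsMaximal}) := krullDim_orderDual
        _ ≤ _ := krullDim_set_le_card _
    · simp
  · calc (ENat.card {p : Ideal A | p.IsMaximal} : WithBot ℕ∞)
        ≤ krullDim (Finset {p : Ideal A | p.IsMaximal}) := card_le_krullDim_finset _
      _ = krullDim (Finset {p : Ideal A | p.IsMaximal})ᵒᵈ := krullDim_orderDual.symm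
      _ ≤ topologicalKrullDim (TotMult A K) :=
        krullDim_le_of_strictMono _ (strictAnti_closureOfZeros hA).dual_left

end TotMult

theorem statement15_general (A K : Type*) [CommRing A] [IsDedekindDomain A]
    (hA : ¬IsField A) [Field K] :
    (∀ (hfin : {p : Ideal A | p.IsMaximal}.Finite),
      topologicalKrullDim (TotMult A K) = hfin.toFinset.card) ∧
    ({p : Ideal A | p.IsMaximal}.Infinite →
      topologicalKrullDim (TotMult A K) = ⊤) := by
  refine ⟨fun hfin => ?_, fun hinf => ?_⟩
  · have := hfin.to_subtype
    rw [TotMult.topologicalKrullDim_eq_card hA, ENat.card_eq_coe_natCard,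
      Nat.card_eq_card_finite_toFinset hfin]
    rfl
  · have := hinf.to_subtype
    rw [TotMult.topologicalKrullDim_eq_card hA, ENat.card_eq_top_of_infinite]
    rfl

theorem statement15 (A K : Type*) [CommRing A] [IsDomain A] [IsDedekindDomain A]
    (hA : ¬IsField A) [Field K] :
    (∀ (hfin : {p : Ideal A | p.IsMaximal}.Finite),
      topologicalKrullDim (TotMult A K) = hfin.toFinset.card) ∧
    ({p : Ideal A | p.IsMaximal}.Infinite →
      topologicalKrullDim (TotMult A K) = ⊤) :=
  statement15_general A K hA
end
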